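/- arXiv:2505.06986 — 5 statements merged into one kernel-verified Lean document; each statement's English description precedes it below -/
import Mathlib

section
/- For z = μ/2 + κe^{iα} with 0 < κ < μ and ε < α < π − ε (where 0 < ε < π/2), one has Re(2iz/(4z²−μ²)) = (sin α)/(4κ) · (1 + κ²/(κ² + 2μκ cos α + μ²)), and in particular Re(2iz/(4z²−μ²)) ≥ (sin ε)/(4κ). -/
/-!
Write `w = κ e^{iα}`, so that `2z - μ = 2w` and `2z + μ = 2(μ + w)`. Partial fractions give
`2iz / (4z² - μ²) = i / (4w) + i / (4(μ + w))`, and `Re (i / v) = Im v / |v|²`. Both `w` and `μ + w`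
have imaginary part `κ sin α`, while `|w|² = κ²` and `|μ + w|² = κ² + 2μκ cos α + μ²`. For the
lower bound, the second summand is nonnegative and `sin α ≥ sin ε` on `[ε, π - ε]`.
-/

open Complex Real

lemma Complex.I_div_re (v : ℂ) : (I / v).re = v.im / normSq v := by
  simp [div_re]

lemma Complex.im_ofReal_add_ofReal_mul_exp_I_mul (μ κ α : ℝ) :
    ((μ : ℂ) + κ * exp (I * α)).im = κ * Real.sin α := by
  rw [mul_comm I, exp_mul_I, ← ofReal_cos, ← ofReal_sin]
  simp only [add_im, mul_im, ofReal_re, ofReal_im, I_re, I_im]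
  ring

lemma Complex.normSq_ofReal_add_ofReal_mul_exp_I_mul (μ κ α : ℝ) :
    normSq ((μ : ℂ) + κ * exp (I * α)) = κ ^ 2 + 2 * μ * κ * Real.cos α + μ ^ 2 := by
  rw [mul_comm I, exp_mul_I, ← ofReal_cos, ← ofReal_sin, normSq_apply]
  simp only [add_re, add_im, mul_re, mul_im, ofReal_re, ofReal_im, I_re, I_im]
  linear_combination κ ^ 2 * Real.sin_sq_add_cos_sq α

lemma Complex.two_I_mul_div_sq_sub_sq_eq {μ w : ℂ} (hw : w ≠ 0) (hμw : μ + w ≠ 0) :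
    2 * I * (μ / 2 + w) / (4 * (μ / 2 + w) ^ 2 - μ ^ 2) = (I / w + I / (μ + w)) / 4 := by
  have hprod : 4 * (μ / 2 + w) ^ 2 - μ ^ 2 = 4 * w * (μ + w) := by ring
  rw [hprod]
  field_simp
  ring

theorem Complex.re_two_I_mul_div_sq_sub_sq (μ κ α : ℝ) (hκ : κ ≠ 0) (hα : Real.sin α ≠ 0) :
    (2 * I * (μ / 2 + κ * exp (I * α)) / (4 * (μ / 2 + κ * exp (I * α)) ^ 2 - μ ^ 2)).re =
      Real.sin α / (4 * κ) * (1 + κ ^ 2 / (κ ^ 2 + 2 * μ * κ * Real.cos α + μ ^ 2)) := by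
  have him := im_ofReal_add_ofReal_mul_exp_I_mul μ κ α
  have hnormSq := normSq_ofReal_add_ofReal_mul_exp_I_mul μ κ α
  have him₀ := im_ofReal_add_ofReal_mul_exp_I_mul 0 κ α
  have hnormSq₀ := normSq_ofReal_add_ofReal_mul_exp_I_mul 0 κ α
  simp only [ofReal_zero, zero_add, mul_zero, zero_mul, add_zero, zero_pow two_ne_zero]
    at him₀ hnormSq₀
  have hne : ∀ v : ℂ, v.im = κ * Real.sin α → v ≠ 0 := fun v hv h0 ↦
    mul_ne_zero hκ hα (by rw [← hv, h0, zero_im])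
  have hD : κ ^ 2 + 2 * μ * κ * Real.cos α + μ ^ 2 ≠ 0 := by
    rw [← hnormSq, normSq_eq_zero.ne]
    exact hne _ him
  rw [two_I_mul_div_sq_sub_sq_eq (hne _ him₀) (hne _ him), div_ofNat_re, add_re, I_div_re,
    I_div_re, him, him₀, hnormSq, hnormSq₀]
  field_simp

lemma Real.sin_le_sin_of_le_of_le_pi_sub {ε α : ℝ} (hε : -(π / 2) ≤ ε) (hεα : ε ≤ α)
    (hαε : α ≤ π - ε) : Real.sin ε ≤ Real.sin α := by
  rcases le_total α (π / 2) with hα | hα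
  · exact sin_le_sin_of_le_of_le_pi_div_two hε hα hεα
  · rw [← sin_pi_sub α]
    exact sin_le_sin_of_le_of_le_pi_div_two hε (by linarith) (by linarith)

theorem stmt_1_general (μ κ ε α : ℝ) (hκ0 : 0 < κ)
    (hε0 : 0 < ε) (hα1 : ε < α) (hα2 : α < π - ε)
    (z : ℂ) (hz : z = (μ : ℂ) / 2 + (κ : ℂ) * Complex.exp (Complex.I * α)) :
    ((2 * Complex.I * z) / (4 * z ^ 2 - (μ : ℂ) ^ 2)).re =
      Real.sin α / (4 * κ) * (1 + κ ^ 2 / (κ ^ 2 + 2 * μ * κ * Real.cos α + μ ^ 2)) ∧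
    ((2 * Complex.I * z) / (4 * z ^ 2 - (μ : ℂ) ^ 2)).re ≥ Real.sin ε / (4 * κ) := by
  have hsin : 0 < Real.sin α := sin_pos_of_pos_of_lt_pi (by linarith) (by linarith)
  have hre := hz ▸ re_two_I_mul_div_sq_sub_sq μ κ α hκ0.ne' hsin.ne'
  refine ⟨hre, ?_⟩
  have hD : 0 ≤ κ ^ 2 + 2 * μ * κ * Real.cos α + μ ^ 2 :=
    normSq_ofReal_add_ofReal_mul_exp_I_mul μ κ α ▸ normSq_nonneg _
  rw [hre, ge_iff_le]
  calc Real.sin ε / (4 * κ)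
      ≤ Real.sin α / (4 * κ) := by
        gcongr
        exact sin_le_sin_of_le_of_le_pi_sub (by linarith) hα1.le hα2.le
    _ ≤ _ := le_mul_of_one_le_right (by positivity) (le_add_of_nonneg_right (by positivity))

theorem stmt_1 (μ κ ε α : ℝ) (hμ : 0 < μ) (hκ0 : 0 < κ) (hκμ : κ < μ)
    (hε0 : 0 < ε) (hε : ε < π / 2) (hα1 : ε < α) (hα2 : α < π - ε)
    (z : ℂ) (hz : z = (μ : ℂ) / 2 + (κ : ℂ) * Complex.exp (Complex.I * α)) :
    ((2 * Complex.I * z) / (4 * z ^ 2 - (μ : ℂ) ^ 2)).re =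
      Real.sin α / (4 * κ) * (1 + κ ^ 2 / (κ ^ 2 + 2 * μ * κ * Real.cos α + μ ^ 2)) ∧
    ((2 * Complex.I * z) / (4 * z ^ 2 - (μ : ℂ) ^ 2)).re ≥ Real.sin ε / (4 * κ) :=
  stmt_1_general μ κ ε α hκ0 hε0 hα1 hα2 z hz
end

section
/- For fixed μ ∈ (0,1], the function f₋(μ,λ) = μ²/4 + (−1 − √(1 − 8μ²λ))/(8λ) is strictly monotonically increasing in λ on (−1/μ², 0) and satisfies f₋(μ,λ) > 3μ²/4 for all λ in that interval. -/
/-! With `s = √(1 - 8 c λ)` one has `(s - 1)(s + 1) = -8 c λ`, so the second summand of `f₋`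
equals `c / (s - 1)`. For `c > 0` and `λ < 0`, `s > 1` decreases in `λ`, so `c / (s - 1)`
increases; and `λ > -1/c` gives `s < 3`, hence `c / (s - 1) > c / 2`. Apply this with `c = μ²`. -/

open Real Set

section

variable {c l : ℝ}

lemma one_lt_sqrt_one_sub_mul (hc : 0 < c) (hl : l < 0) : 1 < √(1 - 8 * c * l) := by
  rw [lt_sqrt zero_le_one]
  nlinarith

lemma neg_one_sub_sqrt_div_eq (hc : 0 < c) (hl : l < 0) :
    (-1 - √(1 - 8 * c * l)) / (8 * l) = c / (√(1 - 8 * c * l) - 1) := by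
  have hs := one_lt_sqrt_one_sub_mul hc hl
  have hsq : √(1 - 8 * c * l) ^ 2 = 1 - 8 * c * l := sq_sqrt (by nlinarith)
  rw [div_eq_div_iff (by linarith) (by linarith)]
  linear_combination (-1) * hsq

lemma sqrt_one_sub_mul_lt_three (hc : 0 < c) (hl : -1 / c < l) : √(1 - 8 * c * l) < 3 := by
  have hcl : -1 < c * l := by rwa [div_lt_iff₀ hc, mul_comm] at hl
  rw [sqrt_lt' three_pos]
  linarith

end

theorem strictMonoOn_add_neg_one_sub_sqrt_div {c : ℝ} (hc : 0 < c) :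
    StrictMonoOn (fun l : ℝ => c / 4 + (-1 - √(1 - 8 * c * l)) / (8 * l)) (Ioo (-1 / c) 0) := by
  intro a ha b hb hab
  simp only [neg_one_sub_sqrt_div_eq hc ha.2, neg_one_sub_sqrt_div_eq hc hb.2, add_lt_add_iff_left]
  have hsb := one_lt_sqrt_one_sub_mul hc hb.2
  have hsab : √(1 - 8 * c * b) < √(1 - 8 * c * a) :=
    sqrt_lt_sqrt (by nlinarith [hb.2]) (by nlinarith)
  exact div_lt_div_of_pos_left hc (by linarith) (by linarith)

theorem three_mul_div_four_lt_add_neg_one_sub_sqrt_div {c l : ℝ} (hc : 0 < c)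
    (hl : l ∈ Ioo (-1 / c) 0) : 3 * c / 4 < c / 4 + (-1 - √(1 - 8 * c * l)) / (8 * l) := by
  rw [neg_one_sub_sqrt_div_eq hc hl.2]
  have hs1 := one_lt_sqrt_one_sub_mul hc hl.2
  have hs3 := sqrt_one_sub_mul_lt_three hc hl.1
  have : c / 2 < c / (√(1 - 8 * c * l) - 1) :=
    div_lt_div_of_pos_left hc (by linarith) (by linarith)
  linarith

theorem stmt_5_general (μ : ℝ) (hμ0 : 0 < μ) :
    StrictMonoOn (fun l : ℝ => μ ^ 2 / 4 + (-1 - Real.sqrt (1 - 8 * μ ^ 2 * l)) / (8 * l))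
      (Set.Ioo (-1 / μ ^ 2) 0) ∧
    ∀ l ∈ Set.Ioo (-1 / μ ^ 2) (0 : ℝ),
      3 * μ ^ 2 / 4 < μ ^ 2 / 4 + (-1 - Real.sqrt (1 - 8 * μ ^ 2 * l)) / (8 * l) := by
  have hμ2 : 0 < μ ^ 2 := by positivity
  exact ⟨strictMonoOn_add_neg_one_sub_sqrt_div hμ2,
    fun l hl => three_mul_div_four_lt_add_neg_one_sub_sqrt_div hμ2 hl⟩

theorem stmt_5 (μ : ℝ) (hμ0 : 0 < μ) (hμ1 : μ ≤ 1) :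
    StrictMonoOn (fun l : ℝ => μ ^ 2 / 4 + (-1 - Real.sqrt (1 - 8 * μ ^ 2 * l)) / (8 * l))
      (Set.Ioo (-1 / μ ^ 2) 0) ∧
    ∀ l ∈ Set.Ioo (-1 / μ ^ 2) (0 : ℝ),
      3 * μ ^ 2 / 4 < μ ^ 2 / 4 + (-1 - Real.sqrt (1 - 8 * μ ^ 2 * l)) / (8 * l) :=
  stmt_5_general μ hμ0
end

section
/- Let μ ∈ (0,1] and λ ∈ (−1/μ², 0), and let ζ₀ = √(f₋(μ,λ)) where f₋(μ,λ) = μ²/4 + (−1 − √(1−8μ²λ))/(8λ). Then ζ₀ is a positive real root of the equation (4z² − μ²)²λ + 4z² + μ² = 0, and ζ₀ > (√3/2)μ. -/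
open Real

theorem stmt_6 (μ l : ℝ) (hμ0 : 0 < μ) (hμ1 : μ ≤ 1)
    (hl1 : -1 / μ ^ 2 < l) (hl2 : l < 0)
    (ζ₀ : ℝ)
    (hζ : ζ₀ = Real.sqrt (μ ^ 2 / 4 + (-1 - Real.sqrt (1 - 8 * μ ^ 2 * l)) / (8 * l))) :
    0 < ζ₀ ∧ (4 * ζ₀ ^ 2 - μ ^ 2) ^ 2 * l + 4 * ζ₀ ^ 2 + μ ^ 2 = 0 ∧
      Real.sqrt 3 / 2 * μ < ζ₀ := by
  have hl : l ≠ 0 := ne_of_lt hl2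
  have hμ2 : 0 < μ ^ 2 := by positivity
  have hml : -1 < l * μ ^ 2 := by rwa [div_lt_iff₀ hμ2] at hl1
  have hs0 : (0:ℝ) ≤ 1 - 8 * μ ^ 2 * l := by nlinarith
  set s := Real.sqrt (1 - 8 * μ ^ 2 * l) with hsdef
  have hs2 : s ^ 2 = 1 - 8 * μ ^ 2 * l := Real.sq_sqrt hs0
  have hsnn : 0 ≤ s := Real.sqrt_nonneg _
  have hs1 : 1 ≤ s := by nlinarith
  have hfpos : 0 < μ ^ 2 / 4 + (-1 - s) / (8 * l) := by
    have hd : 0 < (-1 - s) / (8 * l) :=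
      div_pos_of_neg_of_neg (by linarith) (by linarith)
    linarith
  have hζ2 : ζ₀ ^ 2 = μ ^ 2 / 4 + (-1 - s) / (8 * l) := by
    rw [hζ]; exact Real.sq_sqrt hfpos.le
  have hζpos : 0 < ζ₀ := by rw [hζ]; exact Real.sqrt_pos.mpr hfpos
  have hA : 8 * l * ζ₀ ^ 2 = 2 * μ ^ 2 * l - 1 - s := by
    rw [hζ2]; field_simp; ring
  refine ⟨hζpos, ?_, ?_⟩
  · have h4 : 4 * l * ((4 * ζ₀ ^ 2 - μ ^ 2) ^ 2 * l + 4 * ζ₀ ^ 2 + μ ^ 2) = 0 := by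
      linear_combination (2 * l * (4 * ζ₀ ^ 2 - μ ^ 2) + 1 - s) * hA + hs2
    have h4l : (4 * l : ℝ) ≠ 0 := by
      intro h; apply hl; linarith [h]
    exact (mul_eq_zero.mp h4).resolve_left (by simpa using h4l)
  · have hsgt : -1 - 4 * μ ^ 2 * l < s := by
      nlinarith [mul_pos (neg_pos.mpr hl2) (by nlinarith : (0:ℝ) < 1 + l * μ ^ 2)]
    have key : μ ^ 2 / 2 < (-1 - s) / (8 * l) := by
      rw [lt_div_iff_of_neg (by linarith : 8 * l < 0)]
      nlinarith
    have h34 : (Real.sqrt 3 / 2 * μ) ^ 2 = 3 / 4 * μ ^ 2 := by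
      rw [mul_pow, div_pow, Real.sq_sqrt (by norm_num : (0:ℝ) ≤ 3)]
      ring
    have hlt : (Real.sqrt 3 / 2 * μ) ^ 2 < ζ₀ ^ 2 := by
      rw [h34, hζ2]; linarith
    exact lt_of_pow_lt_pow_left₀ 2 hζpos.le hlt
end

section
/- Let η > 0, μ > 0, c > 0, and define Λ(x,t) = 2η(t/(4η²+μ²) + x), Θ(x,t) = Λ(x,t) + ln(2η/c), D = (4η²+μ²)cosh²Θ. Then the functions E = 4η sech Θ, s = (8η² cosh Θ − 4ηc e^{−Λ})/D, u = −1 + 8η²/D, r = 4ημ cosh Θ / D satisfy the reduced Maxwell–Bloch system: E_t = −s, s_x = E·u + μ·r, u_x = −E·s, r_x = −μ·s, for all (x,t) ∈ ℝ². -/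
/-!
Since `c e^{-Λ} = 2η e^{-Θ}` and `cosh Θ - e^{-Θ} = sinh Θ`, the fields are functions of the
phase `Θ` alone: with `κ = 2η`, `E = 2κ sech Θ`, `s = 2κ² sinh Θ / ((κ² + μ²) cosh² Θ)`,
`u = -1 + 2κ² / ((κ² + μ²) cosh² Θ)`, `r = 2κμ / ((κ² + μ²) cosh Θ)`. The phase moves with
`Θ_x = κ` and `Θ_t = κ / (κ² + μ²)`, so each equation is the chain rule followed by an identity
in `cosh Θ` and `sinh Θ`; only `s_x = E u + μ r` needs `cosh² - sinh² = 1`.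
-/

open Real

namespace MaxwellBloch

variable (κ μ : ℝ)

noncomputable def solitonE (θ : ℝ) : ℝ := 2 * κ / cosh θ

noncomputable def solitonS (θ : ℝ) : ℝ := 2 * κ ^ 2 * sinh θ / ((κ ^ 2 + μ ^ 2) * cosh θ ^ 2)

noncomputable def solitonU (θ : ℝ) : ℝ := -1 + 2 * κ ^ 2 / ((κ ^ 2 + μ ^ 2) * cosh θ ^ 2)

noncomputable def solitonR (θ : ℝ) : ℝ := 2 * κ * μ / ((κ ^ 2 + μ ^ 2) * cosh θ)

variable {κ μ} {f : ℝ → ℝ} {y : ℝ}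

theorem hasDerivAt_solitonE_comp (hf : HasDerivAt f (κ / (κ ^ 2 + μ ^ 2)) y) :
    HasDerivAt (fun y => solitonE κ (f y)) (-solitonS κ μ (f y)) y := by
  refine ((hasDerivAt_const y (2 * κ)).div hf.cosh (cosh_pos _).ne').congr_deriv ?_
  simp only [solitonS]
  field_simp
  ring

theorem hasDerivAt_solitonS_comp (hκ : κ ≠ 0) (hf : HasDerivAt f κ y) :
    HasDerivAt (fun y => solitonS κ μ (f y))
      (solitonE κ (f y) * solitonU κ μ (f y) + μ * solitonR κ μ (f y)) y := by
  have ha : κ ^ 2 + μ ^ 2 ≠ 0 := by positivity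
  have hch := (cosh_pos (f y)).ne'
  refine ((hf.sinh.const_mul (2 * κ ^ 2)).div ((hf.cosh.fun_pow 2).const_mul (κ ^ 2 + μ ^ 2))
    (by positivity)).congr_deriv ?_
  simp only [solitonE, solitonU, solitonR]
  field_simp
  linear_combination 2 * κ ^ 2 * cosh (f y) * cosh_sq_sub_sinh_sq (f y)

theorem hasDerivAt_solitonU_comp (hf : HasDerivAt f κ y) :
    HasDerivAt (fun y => solitonU κ μ (f y)) (-(solitonE κ (f y) * solitonS κ μ (f y))) y := by
  have hch := (cosh_pos (f y)).ne'
  have hU : (fun y => solitonU κ μ (f y)) =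
      fun y => -1 + 2 * κ ^ 2 / (κ ^ 2 + μ ^ 2) * (cosh (f y) ^ 2)⁻¹ := by
    funext y
    rw [solitonU, ← div_div, div_eq_mul_inv _ (cosh (f y) ^ 2)]
  rw [hU]
  refine ((((hf.cosh.fun_pow 2).inv (pow_ne_zero 2 hch)).const_mul _).const_add (-1)).congr_deriv ?_
  simp only [solitonE, solitonS]
  field_simp
  ring

theorem hasDerivAt_solitonR_comp (hf : HasDerivAt f κ y) :
    HasDerivAt (fun y => solitonR κ μ (f y)) (-(μ * solitonS κ μ (f y))) y := by
  have hch := (cosh_pos (f y)).ne'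
  have hR : (fun y => solitonR κ μ (f y)) =
      fun y => 2 * κ * μ / (κ ^ 2 + μ ^ 2) * (cosh (f y))⁻¹ := by
    funext y
    rw [solitonR, ← div_div, div_eq_mul_inv _ (cosh (f y))]
  rw [hR]
  refine ((hf.cosh.inv hch).const_mul _).congr_deriv ?_
  simp only [solitonS]
  field_simp

end MaxwellBloch

theorem cosh_add_log_sub_exp_neg {b c : ℝ} (hb : 0 < b) (hc : 0 < c) (y : ℝ) :
    cosh (y + log (b / c)) - c / b * exp (-y) = sinh (y + log (b / c)) := by
  have hexp : exp (-y) = b / c * exp (-(y + log (b / c))) := by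
    rw [neg_add, exp_add, exp_neg (log _), exp_log (by positivity)]
    field_simp
  rw [hexp, ← cosh_sub_sinh]
  field_simp
  ring

open MaxwellBloch in
theorem stmt_10_general (η μ c : ℝ) (hη : 0 < η) (hc : 0 < c)
    (Λ Θ D E s u r : ℝ → ℝ → ℝ)
    (hΛ : ∀ x t, Λ x t = 2 * η * (t / (4 * η ^ 2 + μ ^ 2) + x))
    (hΘ : ∀ x t, Θ x t = Λ x t + Real.log (2 * η / c))
    (hD : ∀ x t, D x t = (4 * η ^ 2 + μ ^ 2) * Real.cosh (Θ x t) ^ 2)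
    (hE : ∀ x t, E x t = 4 * η / Real.cosh (Θ x t))
    (hs : ∀ x t, s x t =
      (8 * η ^ 2 * Real.cosh (Θ x t) - 4 * η * c * Real.exp (-Λ x t)) / D x t)
    (hu : ∀ x t, u x t = -1 + 8 * η ^ 2 / D x t)
    (hr : ∀ x t, r x t = 4 * η * μ * Real.cosh (Θ x t) / D x t) :
    ∀ x t : ℝ,
      HasDerivAt (fun t' => E x t') (-s x t) t ∧
      HasDerivAt (fun x' => s x' t) (E x t * u x t + μ * r x t) x ∧
      HasDerivAt (fun x' => u x' t) (-(E x t * s x t)) x ∧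
      HasDerivAt (fun x' => r x' t) (-(μ * s x t)) x := by
  intro x t
  have hΘx : HasDerivAt (fun x' => Θ x' t) (2 * η) x := by
    simp only [hΘ, hΛ]
    exact ((((hasDerivAt_id x).const_add _).const_mul _).add_const _).congr_deriv (mul_one _)
  have hΘt : HasDerivAt (fun t' => Θ x t') (2 * η / ((2 * η) ^ 2 + μ ^ 2)) t := by
    simp only [hΘ, hΛ]
    exact ((((hasDerivAt_id t).div_const _).add_const _).const_mul _).add_const _
      |>.congr_deriv (by ring)
  have hE' : ∀ x t, E x t = solitonE (2 * η) (Θ x t) := fun x t => by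
    rw [hE, solitonE]
    ring
  have hs' : ∀ x t, s x t = solitonS (2 * η) μ (Θ x t) := fun x t => by
    rw [hs, hD, solitonS, hΘ, ← cosh_add_log_sub_exp_neg (by positivity : 0 < 2 * η) hc (Λ x t)]
    field_simp
    ring
  have hu' : ∀ x t, u x t = solitonU (2 * η) μ (Θ x t) := fun x t => by
    rw [hu, hD, solitonU]
    ring
  have hr' : ∀ x t, r x t = solitonR (2 * η) μ (Θ x t) := fun x t => by
    rw [hr, hD, solitonR]
    field_simp
    ring
  simp only [hE', hs', hu', hr']
  exact ⟨hasDerivAt_solitonE_comp hΘt, hasDerivAt_solitonS_comp (by positivity) hΘx,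
    hasDerivAt_solitonU_comp hΘx, hasDerivAt_solitonR_comp hΘx⟩

theorem stmt_10 (η μ c : ℝ) (hη : 0 < η) (hμ : 0 < μ) (hc : 0 < c)
    (Λ Θ D E s u r : ℝ → ℝ → ℝ)
    (hΛ : ∀ x t, Λ x t = 2 * η * (t / (4 * η ^ 2 + μ ^ 2) + x))
    (hΘ : ∀ x t, Θ x t = Λ x t + Real.log (2 * η / c))
    (hD : ∀ x t, D x t = (4 * η ^ 2 + μ ^ 2) * Real.cosh (Θ x t) ^ 2)
    (hE : ∀ x t, E x t = 4 * η / Real.cosh (Θ x t))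
    (hs : ∀ x t, s x t =
      (8 * η ^ 2 * Real.cosh (Θ x t) - 4 * η * c * Real.exp (-Λ x t)) / D x t)
    (hu : ∀ x t, u x t = -1 + 8 * η ^ 2 / D x t)
    (hr : ∀ x t, r x t = 4 * η * μ * Real.cosh (Θ x t) / D x t) :
    ∀ x t : ℝ,
      HasDerivAt (fun t' => E x t') (-s x t) t ∧
      HasDerivAt (fun x' => s x' t) (E x t * u x t + μ * r x t) x ∧
      HasDerivAt (fun x' => u x' t) (-(E x t * s x t)) x ∧
      HasDerivAt (fun x' => r x' t) (-(μ * s x t)) x :=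
  stmt_10_general η μ c hη hc Λ Θ D E s u r hΛ hΘ hD hE hs hu hr
end

section
/- With the single-soliton formulas E = 4η sech Θ, s = (8η² cosh Θ − 4ηc e^{−Λ})/D, u = −1 + 8η²/D, r = 4ημ cosh Θ/D, where Λ = 2η(t/(4η²+μ²)+x), Θ = Λ + ln(2η/c), D = (4η²+μ²)cosh²Θ, the Bloch vector satisfies r² + s² + u² = 1 identically. -/
open Real

theorem stmt_11 (η μ c : ℝ) (hη : 0 < η) (hμ : 0 < μ) (hc : 0 < c)
    (Λ Θ D E s u r : ℝ → ℝ → ℝ)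
    (hΛ : ∀ x t, Λ x t = 2 * η * (t / (4 * η ^ 2 + μ ^ 2) + x))
    (hΘ : ∀ x t, Θ x t = Λ x t + Real.log (2 * η / c))
    (hD : ∀ x t, D x t = (4 * η ^ 2 + μ ^ 2) * Real.cosh (Θ x t) ^ 2)
    (hE : ∀ x t, E x t = 4 * η / Real.cosh (Θ x t))
    (hs : ∀ x t, s x t =
      (8 * η ^ 2 * Real.cosh (Θ x t) - 4 * η * c * Real.exp (-Λ x t)) / D x t)
    (hu : ∀ x t, u x t = -1 + 8 * η ^ 2 / D x t)
    (hr : ∀ x t, r x t = 4 * η * μ * Real.cosh (Θ x t) / D x t) :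
    ∀ x t : ℝ, r x t ^ 2 + s x t ^ 2 + u x t ^ 2 = 1 := by
  intro x t
  have hk : (0:ℝ) < 4 * η ^ 2 + μ ^ 2 := by positivity
  have hch : 0 < Real.cosh (Θ x t) := Real.cosh_pos _
  have hratio : (0:ℝ) < 2 * η / c := by positivity
  have hexp : 4 * η * c * Real.exp (-Λ x t) = 8 * η ^ 2 * Real.exp (-(Θ x t)) := by
    rw [hΘ, neg_add, Real.exp_add, Real.exp_neg, Real.exp_neg, Real.exp_log hratio]
    field_simp
    ring
  have hsinh : 8 * η ^ 2 * Real.cosh (Θ x t) - 4 * η * c * Real.exp (-Λ x t)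
      = 8 * η ^ 2 * Real.sinh (Θ x t) := by
    rw [hexp, Real.sinh_eq, Real.cosh_eq]; ring
  have hsq : Real.sinh (Θ x t) ^ 2 = Real.cosh (Θ x t) ^ 2 - 1 := by
    have := Real.cosh_sq_sub_sinh_sq (Θ x t)
    linarith
  rw [hr, hs, hsinh, hu, hD]
  have hDne : (4 * η ^ 2 + μ ^ 2) * Real.cosh (Θ x t) ^ 2 ≠ 0 := by positivity
  field_simp
  linear_combination 64 * η ^ 4 * hsq
end
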